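/- Assume (H2) and (H3). Let k ≥ 1, let m satisfy 0 = m₀ < m₁ < ⋯ < m_k = 1, let q satisfy 0 = q₀ ≤ q₁ ≤ ⋯ ≤ q_k ≤ q_{k+1} = 1, and let q̂ be the diagonal array q̂_{j,s} := q_j for all j∈{0,…,k+1} and s∈𝒮. Then the multi-species Ising Parisi functional satisfies 𝒫_Ising(m, q̂) = 𝒫^single_Ising(m, q), where 𝒫^single_Ising is the same functional computed with a single species and covariance function ξ^single(x) = Σ_{p≥1} β_p² x^p. -/
import Mathlib


open MeasureTheory ProbabilityTheory

noncomputable section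

namespace SpinGlass

variable {S : Type*} [Fintype S]

/-- `β_p² := Σ_{s₁,…,s_p∈𝒮} Δ²_{s₁,…,s_p} λ_{s₁}⋯λ_{s_p}`. -/
def betasq (Δsq : (p : ℕ) → (Fin p → S) → ℝ) (lam : S → ℝ) (p : ℕ) : ℝ :=
  ∑ s : Fin p → S, Δsq p s * ∏ k, lam (s k)

/-- Per-species derivative `ξ^s(x) = (1/λ_s)·∂ξ/∂x_s(x)
= Σ_{p≥1} p Σ_{s₂,…,s_p} Δ²_{s,s₂,…,s_p} λ_{s₂}⋯λ_{s_p} x_{s₂}⋯x_{s_p}`. -/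
def xiDerivS (Δsq : (p : ℕ) → (Fin p → S) → ℝ) (lam : S → ℝ) (s : S) (x : S → ℝ) : ℝ :=
  ∑' p : ℕ, ((p : ℝ) + 1) *
    ∑ v : Fin p → S, Δsq (p + 1) (Fin.cons s v) * ∏ k, (lam (v k) * x (v k))

/-- `θ(x) = Σ_{p≥1}(p−1) Σ_{s₁,…,s_p} Δ²_{s₁,…,s_p} λ_{s₁}⋯λ_{s_p} x_{s₁}⋯x_{s_p}
= Σ_s x_s ∂ξ/∂x_s(x) − ξ(x)`. -/
def thetaFn (Δsq : (p : ℕ) → (Fin p → S) → ℝ) (lam : S → ℝ) (x : S → ℝ) : ℝ :=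
  ∑' p : ℕ, (p : ℝ) * ∑ s : Fin (p + 1) → S, Δsq (p + 1) s * ∏ k, (lam (s k) * x (s k))

/-- Single-species covariance function `ξ^single(x) = Σ_{p≥1} β_p² x^p`. -/
def xiSingle (bsq : ℕ → ℝ) (x : ℝ) : ℝ := ∑' p : ℕ, bsq (p + 1) * x ^ (p + 1)

/-- `(ξ^single)′(x) = Σ_{p≥1} p β_p² x^{p−1}`. -/
def xiSingleDeriv (bsq : ℕ → ℝ) (x : ℝ) : ℝ :=
  ∑' p : ℕ, ((p : ℝ) + 1) * bsq (p + 1) * x ^ p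

/-- One level of the downward Parisi recursion: `isingXlevel m a k r` is the
function `X_{k+1−r}` (of the variables `η₀,…,η_{k−r}`, represented as a function
on `ℕ → ℝ`).  At level `0` it is
`X_{k+1}(η) = log cosh(Σ_{j=0}^{k} η_j a_j)`, and each further level integrates
out the last remaining Gaussian variable:
`X_j(η) = (1/m_j) log ∫ exp(m_j X_{j+1}(η₀,…,η_{j−1},t)) dγ(t)`. -/
def isingXlevel (m : ℕ → ℝ) (a : ℕ → ℝ) (k : ℕ) : ℕ → (ℕ → ℝ) → ℝ
  | 0, η => Real.log (Real.cosh (∑ j ∈ Finset.range (k + 1), η j * a j))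
  | (r + 1), η => (m (k - r))⁻¹ *
      Real.log (∫ t, Real.exp (m (k - r) *
        isingXlevel m a k r (Function.update η (k - r) t)) ∂(gaussianReal 0 1))

/-- The Ising Parisi functional
`𝒫(m,q) = Σ_s λ_s X_{0,s} − ½ Σ_{j=1}^{k} m_j(θ(q_{j+1}) − θ(q_j))`, where
`X_{0,s} = ∫ X_{1,s}(η) dγ(η)` is obtained from the recursion started at
`X_{k+1,s} = log cosh(Σ_j η_j √(ξ^s(q_{j+1}) − ξ^s(q_j)))`. -/
def parisiIsing (lam : S → ℝ) (k : ℕ) (m : ℕ → ℝ)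
    (xs : S → (S → ℝ) → ℝ) (θ : (S → ℝ) → ℝ) (q : ℕ → S → ℝ) : ℝ :=
  (∑ s, lam s *
      ∫ t, isingXlevel m
          (fun j => Real.sqrt (xs s (q (j + 1)) - xs s (q j))) k k
          (Function.update (fun _ => (0 : ℝ)) 0 t) ∂(gaussianReal 0 1)) -
    (1 / 2) * ∑ j ∈ Finset.Icc 1 k, m j * (θ (q (j + 1)) - θ (q j))

lemma prod_mul_const (lam : S → ℝ) {n : ℕ} (v : Fin n → S) (x : ℝ) :
    (∏ k, (lam (v k) * x)) = (∏ k, lam (v k)) * x ^ n := by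
  rw [Finset.prod_mul_distrib, Finset.prod_const]
  simp

lemma cons_sum_eq (lam : S → ℝ) (hlamsum : ∑ s, lam s = 1)
    (Δsq : (p : ℕ) → (Fin p → S) → ℝ)
    (H3a : ∀ t t' : S, Δsq 1 (fun _ => t) = Δsq 1 (fun _ => t'))
    (H3b : ∀ (n : ℕ) (t t' : S),
      (∑ s : Fin (n + 1) → S, Δsq (n + 2) (Fin.cons t s) * ∏ k, lam (s k)) =
        ∑ s : Fin (n + 1) → S, Δsq (n + 2) (Fin.cons t' s) * ∏ k, lam (s k))
    (p : ℕ) (s : S) :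
    (∑ v : Fin p → S, Δsq (p + 1) (Fin.cons s v) * ∏ k, lam (v k)) = betasq Δsq lam (p + 1) := by
  have indep : ∀ t t' : S,
      (∑ v : Fin p → S, Δsq (p + 1) (Fin.cons t v) * ∏ k, lam (v k)) =
        ∑ v : Fin p → S, Δsq (p + 1) (Fin.cons t' v) * ∏ k, lam (v k) := by
    match p with
    | 0 =>
      intro t t'
      have h : ∀ u : S, (Fin.cons u (default : Fin 0 → S) : Fin 1 → S) = fun _ => u := by
        intro u; funext i
        refine Fin.cases ?_ (fun i => i.elim0) i
        rfl
      have key : ∀ u : S, (∑ v : Fin 0 → S, Δsq 1 (Fin.cons u v) * ∏ k : Fin 0, lam (v k))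
          = Δsq 1 (fun _ => u) := by
        intro u
        rw [Fintype.sum_unique]
        rw [h u]
        simp
      rw [key t, key t', H3a t t']
    | (n + 1) => exact H3b n
  have : betasq Δsq lam (p + 1) =
      ∑ t : S, lam t * ∑ v : Fin p → S, Δsq (p + 1) (Fin.cons t v) * ∏ k, lam (v k) := by
    rw [betasq]
    rw [← Fintype.sum_equiv (Fin.consEquiv (fun _ => S))
      (fun tv => Δsq (p + 1) (Fin.cons tv.1 tv.2) * (lam tv.1 * ∏ k, lam (tv.2 k)))
      (fun u => Δsq (p + 1) u * ∏ k, lam (u k)) ?_]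
    · rw [Fintype.sum_prod_type]
      congr 1; funext t
      rw [Finset.mul_sum]
      congr 1; funext v
      ring
    · intro ⟨t, v⟩
      simp [Fin.consEquiv, Fin.prod_univ_succ]
  rw [this]
  symm
  calc ∑ t : S, lam t * ∑ v : Fin p → S, Δsq (p + 1) (Fin.cons t v) * ∏ k, lam (v k)
      = ∑ t : S, lam t * ∑ v : Fin p → S, Δsq (p + 1) (Fin.cons s v) * ∏ k, lam (v k) := by
        exact Finset.sum_congr rfl fun t _ => by rw [indep t s]
    _ = (∑ t : S, lam t) * ∑ v : Fin p → S, Δsq (p + 1) (Fin.cons s v) * ∏ k, lam (v k) := by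
        rw [Finset.sum_mul]
    _ = _ := by rw [hlamsum, one_mul]

lemma xiDerivS_diag (lam : S → ℝ) (hlamsum : ∑ s, lam s = 1)
    (Δsq : (p : ℕ) → (Fin p → S) → ℝ)
    (H3a : ∀ t t' : S, Δsq 1 (fun _ => t) = Δsq 1 (fun _ => t'))
    (H3b : ∀ (n : ℕ) (t t' : S),
      (∑ s : Fin (n + 1) → S, Δsq (n + 2) (Fin.cons t s) * ∏ k, lam (s k)) =
        ∑ s : Fin (n + 1) → S, Δsq (n + 2) (Fin.cons t' s) * ∏ k, lam (s k))
    (s : S) (x : ℝ) :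
    xiDerivS Δsq lam s (fun _ => x) = xiSingleDeriv (betasq Δsq lam) x := by
  refine tsum_congr fun p => ?_
  have : (∑ v : Fin p → S, Δsq (p + 1) (Fin.cons s v) * ∏ k, (lam (v k) * x))
      = betasq Δsq lam (p + 1) * x ^ p := by
    rw [← cons_sum_eq lam hlamsum Δsq H3a H3b p s, Finset.sum_mul]
    refine Finset.sum_congr rfl fun v _ => ?_
    rw [prod_mul_const]
    ring
  rw [this]; ring

lemma thetaFn_inner (lam : S → ℝ) (Δsq : (p : ℕ) → (Fin p → S) → ℝ) (n : ℕ) (x : ℝ) :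
    (∑ u : Fin n → S, Δsq n u * ∏ k, (lam (u k) * x)) = betasq Δsq lam n * x ^ n := by
  rw [betasq, Finset.sum_mul]
  refine Finset.sum_congr rfl fun u _ => ?_
  rw [prod_mul_const]
  ring

lemma betasq_nonneg (lam : S → ℝ) (hlampos : ∀ s, 0 < lam s)
    (Δsq : (p : ℕ) → (Fin p → S) → ℝ) (hΔnonneg : ∀ p s, 0 ≤ Δsq p s) (p : ℕ) :
    0 ≤ betasq Δsq lam p :=
  Finset.sum_nonneg fun u _ => mul_nonneg (hΔnonneg _ _)
    (Finset.prod_nonneg fun k _ => (hlampos _).le)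

lemma thetaFn_diag (lam : S → ℝ) (hlampos : ∀ s, 0 < lam s)
    (Δsq : (p : ℕ) → (Fin p → S) → ℝ) (hΔnonneg : ∀ p s, 0 ≤ Δsq p s)
    (H2 : ∃ ε > (0 : ℝ), Summable fun p : ℕ =>
      (1 + ε) ^ (p + 1) * betasq Δsq lam (p + 1))
    (x : ℝ) (hx0 : 0 ≤ x) (hx1 : x ≤ 1) :
    thetaFn Δsq lam (fun _ => x) =
      x * xiSingleDeriv (betasq Δsq lam) x - xiSingle (betasq Δsq lam) x := by
  obtain ⟨ε, hε, hsum⟩ := H2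
  set b := betasq Δsq lam with hb
  have hbnn : ∀ p, 0 ≤ b p := betasq_nonneg lam hlampos Δsq hΔnonneg
  have hxp : ∀ n : ℕ, x ^ n ≤ 1 := fun n => pow_le_one₀ hx0 hx1
  have hxpn : ∀ n : ℕ, 0 ≤ x ^ n := fun n => pow_nonneg hx0 n
  have key : ∀ p : ℕ, ((p : ℝ) + 1) ≤ ε⁻¹ * (1 + ε) ^ (p + 1) := by
    intro p
    have h1 : 1 + ((p : ℝ) + 1) * ε ≤ (1 + ε) ^ (p + 1) := by
      have := one_add_mul_le_pow (a := ε) (by linarith) (p + 1)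
      push_cast at this; linarith
    have h2 : ε * ((p : ℝ) + 1) ≤ 1 + ((p : ℝ) + 1) * ε := by
      have : (0:ℝ) ≤ (p:ℝ) + 1 := by positivity
      nlinarith
    calc ((p : ℝ) + 1) = ε⁻¹ * (ε * ((p : ℝ) + 1)) := by field_simp
      _ ≤ ε⁻¹ * (1 + ε) ^ (p + 1) := by
          apply mul_le_mul_of_nonneg_left _ (by positivity)
          linarith
  have hA : Summable fun p : ℕ => ((p : ℝ) + 1) * b (p + 1) * x ^ (p + 1) := by
    refine Summable.of_nonneg_of_le
      (fun p => mul_nonneg (mul_nonneg (by positivity) (hbnn _)) (hxpn _))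
      (fun p => ?_) (hsum.mul_left ε⁻¹)
    have h1 : ((p : ℝ) + 1) * b (p + 1) * x ^ (p + 1) ≤ ((p : ℝ) + 1) * b (p + 1) := by
      nlinarith [mul_nonneg (by positivity : (0:ℝ) ≤ (p:ℝ)+1) (hbnn (p+1)), hxp (p+1), hxpn (p+1)]
    have h2 : ((p : ℝ) + 1) * b (p + 1) ≤ ε⁻¹ * ((1 + ε) ^ (p + 1) * b (p + 1)) := by
      have := mul_le_mul_of_nonneg_right (key p) (hbnn (p + 1))
      linarith [this]
    linarith
  have hB : Summable fun p : ℕ => b (p + 1) * x ^ (p + 1) := by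
    refine Summable.of_nonneg_of_le (fun p => mul_nonneg (hbnn _) (hxpn _)) (fun p => ?_) hsum
    have h1 : b (p + 1) * x ^ (p + 1) ≤ b (p + 1) := by
      nlinarith [hbnn (p+1), hxp (p+1), hxpn (p+1)]
    have h2 : (1:ℝ) ≤ (1 + ε) ^ (p + 1) := one_le_pow₀ (by linarith)
    nlinarith [hbnn (p+1)]
  have lhs : thetaFn Δsq lam (fun _ => x)
      = ∑' p : ℕ, (((p : ℝ) + 1) * b (p + 1) * x ^ (p + 1) - b (p + 1) * x ^ (p + 1)) := by
    refine tsum_congr fun p => ?_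
    rw [thetaFn_inner]
    ring
  rw [lhs, Summable.tsum_sub hA hB]
  congr 1
  rw [xiSingleDeriv, ← tsum_mul_left]
  exact tsum_congr fun p => by ring

/-- **Lemma (recovering the single-species Ising Parisi functional).**
Under (H2) and (H3), for any admissible `(m,q)` with the diagonal array
`q̂_{j,s} = q_j`, the multi-species Ising Parisi functional equals the
single-species one computed from `ξ^single(x) = Σ_p β_p² x^p`. -/
theorem parisi_ising_diagonal_reduction
    (lam : S → ℝ) (hlampos : ∀ s, 0 < lam s) (hlamsum : ∑ s, lam s = 1)
    (Δsq : (p : ℕ) → (Fin p → S) → ℝ)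
    (hΔnonneg : ∀ p s, 0 ≤ Δsq p s)
    (hΔsymm : ∀ (p : ℕ) (π : Equiv.Perm (Fin p)) (s : Fin p → S), Δsq p (s ∘ π) = Δsq p s)
    (H2 : ∃ ε > (0 : ℝ), Summable fun p : ℕ =>
      (1 + ε) ^ (p + 1) * betasq Δsq lam (p + 1))
    (H3a : ∀ t t' : S, Δsq 1 (fun _ => t) = Δsq 1 (fun _ => t'))
    (H3b : ∀ (n : ℕ) (t t' : S),
      (∑ s : Fin (n + 1) → S, Δsq (n + 2) (Fin.cons t s) * ∏ k, lam (s k)) =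
        ∑ s : Fin (n + 1) → S, Δsq (n + 2) (Fin.cons t' s) * ∏ k, lam (s k))
    (k : ℕ) (hk : 1 ≤ k) (m : ℕ → ℝ) (q : ℕ → ℝ)
    (hm0 : m 0 = 0) (hmk : m k = 1) (hmmono : ∀ j < k, m j < m (j + 1))
    (hq0 : q 0 = 0) (hqtop : q (k + 1) = 1) (hqmono : ∀ j ≤ k, q j ≤ q (j + 1)) :
    parisiIsing lam k m (fun s => xiDerivS Δsq lam s) (thetaFn Δsq lam)
        (fun j _ => q j) =
      parisiIsing (fun _ : PUnit => (1 : ℝ)) k m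
        (fun _ x => xiSingleDeriv (betasq Δsq lam) (x PUnit.unit))
        (fun x => x PUnit.unit * xiSingleDeriv (betasq Δsq lam) (x PUnit.unit) -
          xiSingle (betasq Δsq lam) (x PUnit.unit))
        (fun j _ => q j) := by
  have hqm : ∀ i j : ℕ, i ≤ j → j ≤ k + 1 → q i ≤ q j := by
    intro i j hij
    induction hij with
    | refl => intro _; exact le_rfl
    | @step n h ih =>
        intro hn
        exact le_trans (ih (by omega)) (hqmono n (by omega))
  have hq01 : ∀ j ≤ k + 1, 0 ≤ q j ∧ q j ≤ 1 := fun j hj =>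
    ⟨hq0 ▸ hqm 0 j (Nat.zero_le j) hj, hqtop ▸ hqm j (k + 1) hj le_rfl⟩
  have key : ∀ s : S,
      (fun j => Real.sqrt (xiDerivS Δsq lam s (fun _ => q (j + 1)) -
          xiDerivS Δsq lam s (fun _ => q j)))
        = fun j => Real.sqrt (xiSingleDeriv (betasq Δsq lam) (q (j + 1)) -
            xiSingleDeriv (betasq Δsq lam) (q j)) := by
    intro s
    funext j
    rw [xiDerivS_diag lam hlamsum Δsq H3a H3b, xiDerivS_diag lam hlamsum Δsq H3a H3b]
  simp only [parisiIsing]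
  congr 1
  · calc ∑ s : S, lam s * (∫ t, isingXlevel m
          (fun j => Real.sqrt (xiDerivS Δsq lam s (fun _ => q (j + 1)) -
            xiDerivS Δsq lam s (fun _ => q j))) k k
          (Function.update (fun _ => (0 : ℝ)) 0 t) ∂(gaussianReal 0 1))
        = ∑ s : S, lam s * (∫ t, isingXlevel m
            (fun j => Real.sqrt (xiSingleDeriv (betasq Δsq lam) (q (j + 1)) -
              xiSingleDeriv (betasq Δsq lam) (q j))) k k
            (Function.update (fun _ => (0 : ℝ)) 0 t) ∂(gaussianReal 0 1)) :=
          Finset.sum_congr rfl fun s _ => by rw [key s]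
      _ = _ := by rw [← Finset.sum_mul, hlamsum, one_mul]; simp
  · congr 1
    refine Finset.sum_congr rfl fun j hj => ?_
    simp only [Finset.mem_Icc] at hj
    have h1 := hq01 (j + 1) (by omega)
    have h2 := hq01 j (by omega)
    rw [thetaFn_diag lam hlampos Δsq hΔnonneg H2 _ h1.1 h1.2,
        thetaFn_diag lam hlampos Δsq hΔnonneg H2 _ h2.1 h2.2]


end SpinGlass
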